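/- The ratio of minimum detectable speeds using only the RN16 signal versus the combined RN16-plus-EPC signal equals √(C_T^{(2)}/T₁³), where C_T^{(2)} = (T₁+T₂)³ + 12T₁T₂T_pause(T₁+T₂+T_pause)/(T₁+T₂); in particular, for T₁ = 7.8 ms, T₂ = 27 ms, T_pause = 1.4 ms the combined-signal v_min is strictly smaller than the single-signal (RN16) v_min by a factor greater than 9. -/

import Mathlib

/-! The constant `K` cancels from the ratio `(K/√(T₁³)) / (K/√C)`, leaving `√C/√(T₁³) = √(C/T₁³)`.
For `T₁ = 7.8 ms`, `T₂ = 27 ms`, `T_pause = 1.4 ms` one has `C/T₁³ ≈ 96.6 > 9²`, so the ratio of the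
two minimum speeds exceeds `9`. -/

noncomputable def C_T2 (T₁ T₂ T_pause : ℝ) : ℝ :=
  (T₁ + T₂) ^ 3 + 12 * T₁ * T₂ * T_pause * (T₁ + T₂ + T_pause) / (T₁ + T₂)

lemma C_T2_pos {T₁ T₂ T_pause : ℝ} (h₁ : 0 < T₁) (h₂ : 0 < T₂) (hp : 0 ≤ T_pause) :
    0 < C_T2 T₁ T₂ T_pause := by
  unfold C_T2
  positivity

lemma div_sqrt_div_div_sqrt {K a : ℝ} (hK : K ≠ 0) (ha : 0 ≤ a) (b : ℝ) :
    (K / √a) / (K / √b) = √(b / a) := by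
  rw [div_div_div_cancel_left' _ _ hK, Real.sqrt_div' _ ha]

lemma nine_lt_sqrt_C_T2_div : 9 < √(C_T2 7.8e-3 27e-3 1.4e-3 / (7.8e-3 : ℝ) ^ 3) := by
  rw [Real.lt_sqrt (by norm_num)]
  norm_num [C_T2]

theorem stmt_16 (K : ℝ) (hK : 0 < K) :
    (∀ T₁ T₂ T_pause : ℝ, 0 < T₁ → 0 < T₂ → 0 ≤ T_pause →
        (K / Real.sqrt (T₁ ^ 3)) / (K / Real.sqrt (C_T2 T₁ T₂ T_pause)) =
          Real.sqrt (C_T2 T₁ T₂ T_pause / T₁ ^ 3)) ∧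
      9 * (K / Real.sqrt (C_T2 (7.8e-3) (27e-3) (1.4e-3))) <
        K / Real.sqrt ((7.8e-3 : ℝ) ^ 3) := by
  have ratio : ∀ T₁ T₂ T_pause : ℝ, 0 < T₁ → 0 < T₂ → 0 ≤ T_pause →
      (K / √(T₁ ^ 3)) / (K / √(C_T2 T₁ T₂ T_pause)) = √(C_T2 T₁ T₂ T_pause / T₁ ^ 3) :=
    fun T₁ _ _ h₁ _ _ => div_sqrt_div_div_sqrt hK.ne' (pow_pos h₁ 3).le _
  refine ⟨ratio, ?_⟩
  have hv₂ : 0 < K / √(C_T2 7.8e-3 27e-3 1.4e-3) :=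
    div_pos hK (Real.sqrt_pos.2 (C_T2_pos (by norm_num) (by norm_num) (by norm_num)))
  have h := nine_lt_sqrt_C_T2_div
  rw [← ratio _ _ _ (by norm_num) (by norm_num) (by norm_num), lt_div_iff₀ hv₂] at h
  exact h
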